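/- arXiv:2411.01713 — 2 statements merged into one kernel-verified Lean document; each statement's English description precedes it below -/
import Mathlib

section
/- Let E be a real inner product space, let f : E → ℝ be differentiable with gradient that is Lipschitz with constant L > 0, and fix θ ∈ E. Let g be a square-integrable E-valued random variable on a probability space with E[g] = ∇f(θ), and let η be a step size with 0 ≤ η ≤ 2/L. Then the SGD step θ' = θ − η g satisfies E[f(θ')] − f(θ) ≤ −η(1 − ηL/2)·‖∇f(θ)‖² + (η²L/2)·Var(g), where Var(g) := E[‖g − E[g]‖²]. -/
open MeasureTheory
open scoped RealInnerProductSpace NNReal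

/-! Along the segment `t ↦ x + t • v` the derivative of `f` drifts from `⟪∇f x, v⟫` by at most
`K t ‖v‖²`, so `f (x + v)` stays within `K/2 ‖v‖²` of its tangent approximation. Taking
`v = -η g ω` and integrating, the linear term averages to `-η ‖∇f θ‖²` because `E[g] = ∇f θ`, and
the quadratic term is controlled by `E‖g‖² = Var(g) + ‖∇f θ‖²`. -/

section

variable {E : Type*} [NormedAddCommGroup E] [InnerProductSpace ℝ E] [CompleteSpace E]
  {f : E → ℝ} {K : ℝ≥0}

theorem HasGradientAt.hasDerivAt_comp_add_smul {f' x v : E} {t : ℝ}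
    (h : HasGradientAt f f' (x + t • v)) :
    HasDerivAt (fun t : ℝ => f (x + t • v)) ⟪f', v⟫ t := by
  have hline : HasDerivAt (fun t : ℝ => x + t • v) v t := by
    simpa using ((hasDerivAt_id t).smul_const v).const_add x
  simpa [Function.comp_def] using h.hasFDerivAt.comp_hasDerivAt t hline

theorem LipschitzWith.abs_sub_sub_inner_gradient_le (hf : Differentiable ℝ f)
    (hK : LipschitzWith K (gradient f)) (x v : E) :
    |f (x + v) - f x - ⟪gradient f x, v⟫| ≤ K / 2 * ‖v‖ ^ 2 := by
  have hderiv (t : ℝ) : HasDerivAt (fun t : ℝ => f (x + t • v) - f x - t * ⟪gradient f x, v⟫)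
      (⟪gradient f (x + t • v), v⟫ - ⟪gradient f x, v⟫) t :=
    ((hf _).hasGradientAt.hasDerivAt_comp_add_smul.sub_const (f x)).fun_sub
      (hasDerivAt_mul_const _)
  have hbound (t : ℝ) (ht : t ∈ Set.Ico (0 : ℝ) 1) :
      ‖⟪gradient f (x + t • v), v⟫ - ⟪gradient f x, v⟫‖ ≤ K * ‖v‖ ^ 2 * t := by
    rw [← inner_sub_left, Real.norm_eq_abs]
    calc |⟪gradient f (x + t • v) - gradient f x, v⟫|
        ≤ ‖gradient f (x + t • v) - gradient f x‖ * ‖v‖ := abs_real_inner_le_norm _ _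
      _ ≤ K * ‖t • v‖ * ‖v‖ := by
          gcongr
          simpa [dist_eq_norm] using hK.dist_le_mul (x + t • v) x
      _ = K * ‖v‖ ^ 2 * t := by
          rw [norm_smul, Real.norm_of_nonneg ht.1]
          ring
  have hB (t : ℝ) : HasDerivAt (fun t : ℝ => K / 2 * ‖v‖ ^ 2 * t ^ 2) (K * ‖v‖ ^ 2 * t) t :=
    ((hasDerivAt_pow 2 t).const_mul (K / 2 * ‖v‖ ^ 2)).congr_deriv (by ring)
  simpa using image_norm_le_of_norm_deriv_right_le_deriv_boundary
    (fun t _ => (hderiv t).continuousAt.continuousWithinAt)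
    (fun t _ => (hderiv t).hasDerivWithinAt) (by simp) hB hbound
    (Set.right_mem_Icc.mpr zero_le_one)

variable {Ω : Type*} [MeasurableSpace Ω] {μ : Measure Ω}

theorem integral_norm_sub_integral_sq [IsProbabilityMeasure μ] {g : Ω → E} (hg : MemLp g 2 μ) :
    ∫ ω, ‖g ω - ∫ ω', g ω' ∂μ‖ ^ 2 ∂μ = ∫ ω, ‖g ω‖ ^ 2 ∂μ - ‖∫ ω, g ω ∂μ‖ ^ 2 := by
  set m := ∫ ω, g ω ∂μ
  have hg1 : Integrable g μ := hg.integrable one_le_two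
  have hsq : Integrable (fun ω => ‖g ω‖ ^ 2) μ := (memLp_two_iff_integrable_sq_norm hg.1).mp hg
  have hcross : Integrable (fun ω => 2 * ⟪m, g ω⟫) μ := (hg1.const_inner m).const_mul 2
  simp_rw [norm_sub_sq_real, real_inner_comm m]
  rw [integral_add (f := fun ω => ‖g ω‖ ^ 2 - 2 * ⟪m, g ω⟫) (hsq.sub hcross) (integrable_const _),
    integral_sub hsq hcross, integral_const_mul, integral_inner hg1, real_inner_self_eq_norm_sq]
  simp only [integral_const, probReal_univ, smul_eq_mul, one_mul]
  ring

theorem LipschitzWith.integrable_comp_add [IsFiniteMeasure μ] (hf : Differentiable ℝ f)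
    (hK : LipschitzWith K (gradient f)) (x : E) {u : Ω → E} (hu : MemLp u 2 μ) :
    Integrable (fun ω => f (x + u ω)) μ := by
  have hlin : Integrable (fun ω => f x + ⟪gradient f x, u ω⟫) μ :=
    (integrable_const _).fun_add ((hu.integrable one_le_two).const_inner _)
  have hsq : Integrable (fun ω => ‖u ω‖ ^ 2) μ := (memLp_two_iff_integrable_sq_norm hu.1).mp hu
  have hrem : Integrable (fun ω => f (x + u ω) - (f x + ⟪gradient f x, u ω⟫)) μ := by
    refine (hsq.const_mul (K / 2)).mono' ?_ (ae_of_all _ fun ω => ?_)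
    · exact (hf.continuous.comp_aestronglyMeasurable (aestronglyMeasurable_const.add hu.1)).sub
        hlin.1
    · rw [Real.norm_eq_abs, ← sub_sub]
      exact hK.abs_sub_sub_inner_gradient_le hf x (u ω)
  simpa only [sub_add_cancel] using hrem.fun_add hlin

theorem LipschitzWith.integral_comp_add_le [IsProbabilityMeasure μ] (hf : Differentiable ℝ f)
    (hK : LipschitzWith K (gradient f)) (x : E) {u : Ω → E} (hu : MemLp u 2 μ) :
    ∫ ω, f (x + u ω) ∂μ ≤
      f x + ⟪gradient f x, ∫ ω, u ω ∂μ⟫ + K / 2 * ∫ ω, ‖u ω‖ ^ 2 ∂μ := by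
  have hu1 : Integrable u μ := hu.integrable one_le_two
  have hsq : Integrable (fun ω => ‖u ω‖ ^ 2) μ := (memLp_two_iff_integrable_sq_norm hu.1).mp hu
  calc ∫ ω, f (x + u ω) ∂μ
      ≤ ∫ ω, (f x + ⟪gradient f x, u ω⟫ + K / 2 * ‖u ω‖ ^ 2) ∂μ := by
        refine integral_mono (hK.integrable_comp_add hf x hu)
          (((integrable_const _).fun_add (hu1.const_inner _)).fun_add (hsq.const_mul _)) fun ω => ?_
        linarith [(abs_le.mp (hK.abs_sub_sub_inner_gradient_le hf x (u ω))).2]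
    _ = f x + ⟪gradient f x, ∫ ω, u ω ∂μ⟫ + K / 2 * ∫ ω, ‖u ω‖ ^ 2 ∂μ := by
        rw [integral_add ((integrable_const _).fun_add (hu1.const_inner _)) (hsq.const_mul _),
          integral_add (integrable_const _) (hu1.const_inner _), integral_const, integral_inner hu1,
          integral_const_mul]
        simp

end

theorem sgd_descent_lemma_general {E : Type*} [NormedAddCommGroup E] [InnerProductSpace ℝ E]
    [CompleteSpace E]
    {Ω : Type*} [MeasurableSpace Ω] {μ : Measure Ω} [IsProbabilityMeasure μ]
    (f : E → ℝ) (hf : Differentiable ℝ f) (L : ℝ) (hL : 0 < L)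
    (hLip : LipschitzWith (Real.toNNReal L) (fun x => gradient f x))
    (θ : E) (g : Ω → E) (hg : MemLp g 2 μ)
    (hmean : (∫ ω, g ω ∂μ) = gradient f θ)
    (η : ℝ) :
    (∫ ω, f (θ - η • g ω) ∂μ) - f θ ≤
      -η * (1 - η * L / 2) * ‖gradient f θ‖ ^ 2 +
        (η ^ 2 * L / 2) * ∫ ω, ‖g ω - ∫ ω', g ω' ∂μ‖ ^ 2 ∂μ := by
  have hstep := hLip.integral_comp_add_le (u := fun ω => -(η • g ω)) hf θ (hg.const_smul η).neg
  have hnorm (ω : Ω) : ‖-(η • g ω)‖ ^ 2 = η ^ 2 * ‖g ω‖ ^ 2 := by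
    rw [norm_neg, norm_smul, mul_pow, Real.norm_eq_abs, sq_abs]
  simp only [← sub_eq_add_neg, hnorm, integral_neg, integral_smul, integral_const_mul,
    inner_neg_right, inner_smul_right, hmean, real_inner_self_eq_norm_sq,
    Real.coe_toNNReal L hL.le] at hstep
  rw [integral_norm_sub_integral_sq hg, hmean]
  linear_combination hstep

/-- Descent lemma for SGD (Lemma 1): if `f : E → ℝ` is differentiable with `L`-Lipschitz
gradient, `g` is a square-integrable random variable with mean `∇f(θ)`, and
`0 ≤ η ≤ 2/L`, then the SGD step `θ' = θ − η g` satisfies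
`E[f(θ')] − f(θ) ≤ −η(1 − ηL/2)·‖∇f(θ)‖² + (η²L/2)·Var(g)`,
where `Var(g) = E[‖g − E[g]‖²]`. -/
theorem sgd_descent_lemma {E : Type*} [NormedAddCommGroup E] [InnerProductSpace ℝ E]
    [CompleteSpace E]
    {Ω : Type*} [MeasurableSpace Ω] {μ : Measure Ω} [IsProbabilityMeasure μ]
    (f : E → ℝ) (hf : Differentiable ℝ f) (L : ℝ) (hL : 0 < L)
    (hLip : LipschitzWith (Real.toNNReal L) (fun x => gradient f x))
    (θ : E) (g : Ω → E) (hg : MemLp g 2 μ)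
    (hmean : (∫ ω, g ω ∂μ) = gradient f θ)
    (η : ℝ) (hη0 : 0 ≤ η) (hη2 : η ≤ 2 / L) :
    (∫ ω, f (θ - η • g ω) ∂μ) - f θ ≤
      -η * (1 - η * L / 2) * ‖gradient f θ‖ ^ 2 +
        (η ^ 2 * L / 2) * ∫ ω, ‖g ω - ∫ ω', g ω' ∂μ‖ ^ 2 ∂μ :=
  sgd_descent_lemma_general f hf L hL hLip θ g hg hmean η
end

section
/- Let E be a real inner product space, θ₀, θ̃_t, θ_{t−1} ∈ E, with γ_t := ‖θ̃_t − θ₀‖ > 0 and γ_{t−1} := ‖θ_{t−1} − θ₀‖, and deviation ratio r_t := max{0, γ_t − γ_{t−1}} / γ_t. If λ > 1, γ_t > γ_{t−1}, and λ r_t ≤ 1, then the SPD update θ_t = θ̃_t − λ r_t·(θ̃_t − θ₀) satisfies 0 ≤ ‖θ_t − θ₀‖ < γ_{t−1}. -/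
/-!
Since `θ_t − θ₀ = (1 − λ r_t)(θ̃_t − θ₀)` and `λ r_t ≤ 1`, the new deviation is `(1 − λ r_t) γ_t`.
When `γ_t > γ_{t−1}` we have `r_t γ_t = γ_t − γ_{t−1}`, so the new deviation is
`γ_t − λ (γ_t − γ_{t−1})`, which lies below `γ_{t−1}` exactly because `λ > 1`.
-/

theorem norm_sub_smul_sub_sub {E : Type*} [SeminormedAddCommGroup E] [NormedSpace ℝ E]
    (x y : E) {c : ℝ} (hc : c ≤ 1) : ‖x - c • (x - y) - y‖ = (1 - c) * ‖x - y‖ := by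
  have hsub : x - c • (x - y) - y = (1 - c) • (x - y) := by
    rw [sub_smul, one_smul]
    abel
  rw [hsub, norm_smul, Real.norm_of_nonneg (sub_nonneg.2 hc)]

theorem max_zero_sub_div_mul_cancel {a b : ℝ} (hba : b ≤ a) (ha : a ≠ 0) :
    max 0 (a - b) / a * a = a - b := by
  rw [max_eq_right (sub_nonneg.2 hba), div_mul_cancel₀ _ ha]

theorem spd_strong_regularization_general {E : Type*} [NormedAddCommGroup E]
    [InnerProductSpace ℝ E] (θ₀ θtilde θt : E)
    (γt γprev rt lam : ℝ)
    (hγt : γt = ‖θtilde - θ₀‖)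
    (hγtpos : 0 < γt)
    (hrt : rt = max 0 (γt - γprev) / γt)
    (hlam : 1 < lam) (hγ : γprev < γt) (hlr : lam * rt ≤ 1)
    (hθt : θt = θtilde - (lam * rt) • (θtilde - θ₀)) :
    0 ≤ ‖θt - θ₀‖ ∧ ‖θt - θ₀‖ < γprev := by
  have hnorm : ‖θt - θ₀‖ = (1 - lam * rt) * γt := by
    rw [hθt, hγt]
    exact norm_sub_smul_sub_sub θtilde θ₀ hlr
  have hratio : rt * γt = γt - γprev := by
    rw [hrt]
    exact max_zero_sub_div_mul_cancel hγ.le hγtpos.ne'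
  refine ⟨norm_nonneg _, ?_⟩
  calc ‖θt - θ₀‖ = γt - lam * (γt - γprev) := by rw [hnorm, ← hratio]; ring
    _ < γt - (γt - γprev) := by gcongr; exact lt_mul_of_one_lt_left (sub_pos.2 hγ) hlam
    _ = γprev := sub_sub_cancel γt γprev

/-- Strong-regularization regime of SPD: if `λ > 1`, `γ_t > γ_{t−1}`, and
`λ r_t ≤ 1`, then the SPD update `θ_t = θ̃_t − λ r_t·(θ̃_t − θ₀)` satisfies
`0 ≤ ‖θ_t − θ₀‖ < γ_{t−1}`. -/
theorem spd_strong_regularization {E : Type*} [NormedAddCommGroup E]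
    [InnerProductSpace ℝ E] (θ₀ θtilde θprev θt : E)
    (γt γprev rt lam : ℝ)
    (hγt : γt = ‖θtilde - θ₀‖) (hγprev : γprev = ‖θprev - θ₀‖)
    (hγtpos : 0 < γt)
    (hrt : rt = max 0 (γt - γprev) / γt)
    (hlam : 1 < lam) (hγ : γprev < γt) (hlr : lam * rt ≤ 1)
    (hθt : θt = θtilde - (lam * rt) • (θtilde - θ₀)) :
    0 ≤ ‖θt - θ₀‖ ∧ ‖θt - θ₀‖ < γprev :=
  spd_strong_regularization_general θ₀ θtilde θt γt γprev rt lam hγt hγtpos hrt hlam hγ hlr hθt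
end
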